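/- arXiv:1903.12496 — 5 statements merged into one kernel-verified Lean document; each statement's English description precedes it below -/
import Mathlib

section
/- Let p ∈ (1,∞), n, N ≥ 1 and 0 < λ ≤ Λ. Suppose T₁, T₂ ∈ ℝ^{n×n} are matrices such that λ|Q| ≤ |Q Tᵢ| ≤ Λ|Q| for every Q ∈ ℝ^{N×n} and i = 1, 2. Then there exists a constant c, depending only on p, n, N, λ, Λ, such that |A_{T₁}(Q) − A_{T₂}(Q)| ≤ c |Q|^{p−1} |T₁ − T₂| for every Q ∈ ℝ^{N×n}. -/
open scoped BigOperators

/-- The Frobenius norm of a real matrix. -/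
noncomputable def frobNorm {m n : ℕ} (Q : Matrix (Fin m) (Fin n) ℝ) : ℝ :=
  Real.sqrt (∑ i, ∑ j, (Q i j) ^ 2)

/-- The `p`-Laplacian nonlinearity `A(P) = |P|^{p-2} P` (Frobenius norm). -/
noncomputable def pLapA (p : ℝ) {N n : ℕ} (P : Matrix (Fin N) (Fin n) ℝ) :
    Matrix (Fin N) (Fin n) ℝ :=
  frobNorm P ^ (p - 2) • P

/-- The transformed nonlinearity `A_T(Q) = A(Q T) Tᵗ`. -/
noncomputable def pLapAT (p : ℝ) {N n : ℕ} (T : Matrix (Fin n) (Fin n) ℝ)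
    (Q : Matrix (Fin N) (Fin n) ℝ) : Matrix (Fin N) (Fin n) ℝ :=
  pLapA p (Q * T) * T.transpose

/-!
Split `A_{T₁}(Q) - A_{T₂}(Q) = A(QT₁)(T₁ - T₂)ᵗ + (A(QT₁) - A(QT₂))T₂ᵗ`. The first term is at most
`Λ^{p-1}|Q|^{p-1}|T₁ - T₂|`, and testing the hypothesis on matrix units gives `|T₂| ≤ √n Λ`.
For the second term, `λ|Q| ≤ |QT₂| ≤ Λ|Q|`, `|QT₁| ≤ Λ|Q|` and `|QT₁ - QT₂| ≤ |Q||T₁ - T₂|`.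
If `|T₁ - T₂| ≤ λ/2`, the segment from `QT₂` to `QT₁` stays in the shell
`λ|Q|/2 ≤ |x| ≤ 3Λ|Q|/2`, on which `x ↦ |x|^{p-2} x` has derivative of norm at most
`(1 + |p - 2|)|x|^{p-2}`, so the mean value theorem applies. Otherwise the crude bound
`|A(QT₁)| + |A(QT₂)| ≤ 2Λ^{p-1}|Q|^{p-1}` is already `≤ (4Λ^{p-1}/λ)|Q|^{p-1}|T₁ - T₂|`.
-/

open Set
open scoped Matrix RealInnerProductSpace

noncomputable def shellConst (p lam Lam : ℝ) : ℝ :=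
  (1 + |p - 2|) * ((lam / 2) ^ (p - 2) + (3 / 2 * Lam) ^ (p - 2)) + 4 * Lam ^ (p - 1) / lam

theorem shellConst_pos (p : ℝ) {lam Lam : ℝ} (hlam : 0 < lam) (hLam : 0 < Lam) :
    0 < shellConst p lam Lam := by
  unfold shellConst
  positivity

section
variable {E : Type*} [NormedAddCommGroup E] [InnerProductSpace ℝ E]

theorem hasFDerivAt_norm_rpow_of_ne_zero (q : ℝ) {x : E} (hx : x ≠ 0) :
    HasFDerivAt (fun x : E ↦ ‖x‖ ^ q) ((q * ‖x‖ ^ (q - 2)) • innerSL ℝ x) x := by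
  apply HasStrictFDerivAt.hasFDerivAt
  convert! (hasStrictFDerivAt_norm_sq x).rpow_const (p := q / 2) (by simp [hx]) using 0
  simp_rw [← Real.rpow_natCast_mul (norm_nonneg _), ← Nat.cast_smul_eq_nsmul ℝ, smul_smul]
  ring_nf

theorem HasDerivAt.norm_rpow_smul_self {γ : ℝ → E} {v : E} {s : ℝ} (q : ℝ)
    (hγ : HasDerivAt γ v s) (hs : γ s ≠ 0) :
    HasDerivAt (fun t ↦ ‖γ t‖ ^ q • γ t)
      (‖γ s‖ ^ q • v + (q * ‖γ s‖ ^ (q - 2) * ⟪γ s, v⟫) • γ s) s := by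
  have hnorm := (hasFDerivAt_norm_rpow_of_ne_zero q hs).comp_hasDerivAt s hγ
  simp only [Function.comp_def, FunLike.coe_smul, Pi.smul_apply, innerSL_apply_apply,
    smul_eq_mul] at hnorm
  exact hnorm.smul hγ

theorem norm_deriv_rpow_smul_self_le (q : ℝ) {x : E} (hx : x ≠ 0) (v : E) :
    ‖‖x‖ ^ q • v + (q * ‖x‖ ^ (q - 2) * ⟪x, v⟫) • x‖ ≤ (1 + |q|) * ‖x‖ ^ q * ‖v‖ := by
  have hx' : 0 < ‖x‖ := norm_pos_iff.mpr hx
  have hpow : ‖x‖ ^ (q - 2) * ‖x‖ * ‖x‖ = ‖x‖ ^ q := by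
    rw [mul_assoc, ← sq, ← Real.rpow_natCast, ← Real.rpow_add hx']
    norm_num
  calc ‖‖x‖ ^ q • v + (q * ‖x‖ ^ (q - 2) * ⟪x, v⟫) • x‖
      ≤ ‖x‖ ^ q * ‖v‖ + |q| * ‖x‖ ^ (q - 2) * |⟪x, v⟫| * ‖x‖ := by
        refine (norm_add_le _ _).trans_eq ?_
        rw [norm_smul, norm_smul, Real.norm_eq_abs, Real.norm_eq_abs, abs_mul, abs_mul,
          abs_of_nonneg (by positivity : (0 : ℝ) ≤ ‖x‖ ^ (q - 2)),
          abs_of_nonneg (by positivity : (0 : ℝ) ≤ ‖x‖ ^ q)]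
    _ ≤ ‖x‖ ^ q * ‖v‖ + |q| * ‖x‖ ^ (q - 2) * (‖x‖ * ‖v‖) * ‖x‖ := by
        gcongr
        exact abs_real_inner_le_norm x v
    _ = (1 + |q|) * ‖x‖ ^ q * ‖v‖ := by
        rw [← hpow]; ring

theorem Real.rpow_le_rpow_add_rpow {r R x : ℝ} (q : ℝ) (hr : 0 < r) (hrx : r ≤ x) (hxR : x ≤ R) :
    x ^ q ≤ r ^ q + R ^ q := by
  rcases le_total 0 q with hq | hq
  · linarith [Real.rpow_le_rpow (hr.le.trans hrx) hxR hq, Real.rpow_nonneg hr.le q]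
  · linarith [Real.rpow_le_rpow_of_nonpos hr hrx hq,
      Real.rpow_nonneg (hr.trans_le (hrx.trans hxR)).le q]

theorem norm_rpow_smul_self_sub_le_of_segment (q : ℝ) {a b : E} {r R : ℝ} (hr : 0 < r)
    (hseg : ∀ s ∈ Icc (0 : ℝ) 1, r ≤ ‖b + s • (a - b)‖ ∧ ‖b + s • (a - b)‖ ≤ R) :
    ‖‖a‖ ^ q • a - ‖b‖ ^ q • b‖ ≤ (1 + |q|) * (r ^ q + R ^ q) * ‖a - b‖ := by
  set γ : ℝ → E := fun s ↦ b + s • (a - b)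
  have hγ : ∀ s, HasDerivAt γ (a - b) s := fun s ↦ by
    simpa only [one_smul] using ((hasDerivAt_id' s).smul_const (a - b)).const_add b
  have hne : ∀ s ∈ Icc (0 : ℝ) 1, γ s ≠ 0 := fun s hs ↦
    norm_pos_iff.mp (hr.trans_le (hseg s hs).1)
  have hbound : ∀ s ∈ Ico (0 : ℝ) 1,
      ‖‖γ s‖ ^ q • (a - b) + (q * ‖γ s‖ ^ (q - 2) * ⟪γ s, a - b⟫) • γ s‖
        ≤ (1 + |q|) * (r ^ q + R ^ q) * ‖a - b‖ := fun s hs ↦ by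
    have hs := Ico_subset_Icc_self hs
    grw [norm_deriv_rpow_smul_self_le q (hne s hs) (a - b),
      Real.rpow_le_rpow_add_rpow q hr (hseg s hs).1 (hseg s hs).2]
  have h := norm_image_sub_le_of_norm_deriv_le_segment_01' (f := fun t ↦ ‖γ t‖ ^ q • γ t)
    (fun s hs ↦ ((hγ s).norm_rpow_smul_self q (hne s hs)).hasDerivWithinAt) hbound
  simpa [γ] using h

theorem norm_rpow_smul_self_sub_le_of_norm_sub_le (q : ℝ) {a b : E} {ρ P : ℝ} (hρ : 0 < ρ)
    (hρb : ρ ≤ ‖b‖) (hbP : ‖b‖ ≤ P) (hab : ‖a - b‖ ≤ ρ / 2) :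
    ‖‖a‖ ^ q • a - ‖b‖ ^ q • b‖ ≤ (1 + |q|) * ((ρ / 2) ^ q + (3 / 2 * P) ^ q) * ‖a - b‖ := by
  refine norm_rpow_smul_self_sub_le_of_segment q (by positivity) fun s hs ↦ ?_
  have hs' : ‖s • (a - b)‖ ≤ ‖a - b‖ := by
    rw [norm_smul, Real.norm_of_nonneg hs.1]
    exact mul_le_of_le_one_left (norm_nonneg _) hs.2
  constructor
  · linarith [norm_sub_le_norm_add b (s • (a - b))]
  · linarith [norm_add_le b (s • (a - b))]

theorem norm_rpow_smul_self {q : ℝ} (hq : q + 1 ≠ 0) (x : E) : ‖‖x‖ ^ q • x‖ = ‖x‖ ^ (q + 1) := by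
  rw [norm_smul, Real.norm_of_nonneg (by positivity)]
  rcases eq_or_ne x 0 with rfl | hx
  · simp [Real.zero_rpow hq]
  · rw [Real.rpow_add_one (norm_ne_zero_iff.mpr hx)]

theorem norm_rpow_smul_self_sub_le_of_mem_shell {p lam Lam t d : ℝ} (hp : 1 < p)
    (hlam : 0 < lam) (ht : 0 < t) {a b : E} (ha : ‖a‖ ≤ Lam * t) (hb : lam * t ≤ ‖b‖)
    (hb' : ‖b‖ ≤ Lam * t) (hab : ‖a - b‖ ≤ t * d) :
    ‖‖a‖ ^ (p - 2) • a - ‖b‖ ^ (p - 2) • b‖ ≤ shellConst p lam Lam * t ^ (p - 1) * d := by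
  have hLam : 0 < Lam := pos_of_mul_pos_left ((mul_pos hlam ht).trans_le (hb.trans hb')) ht.le
  have hd : 0 ≤ d := nonneg_of_mul_nonneg_right ((norm_nonneg _).trans hab) ht
  have ht' : t ^ (p - 2) * t = t ^ (p - 1) := by
    rw [← Real.rpow_add_one ht.ne']; ring_nf
  set C₁ := (1 + |p - 2|) * ((lam / 2) ^ (p - 2) + (3 / 2 * Lam) ^ (p - 2))
  set C₂ := 4 * Lam ^ (p - 1) / lam
  have hC₁ : 0 ≤ C₁ := by positivity
  have hC₂ : 0 ≤ C₂ := by positivity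
  rcases le_or_gt d (lam / 2) with hclose | hfar
  · have h := norm_rpow_smul_self_sub_le_of_norm_sub_le (p - 2) (mul_pos hlam ht) hb hb'
      (hab.trans (by nlinarith))
    rw [show lam * t / 2 = lam / 2 * t by ring, show 3 / 2 * (Lam * t) = 3 / 2 * Lam * t by ring,
      Real.mul_rpow (by positivity) ht.le, Real.mul_rpow (by positivity) ht.le] at h
    calc _ ≤ _ := h
      _ ≤ C₁ * t ^ (p - 2) * (t * d) := by
          rw [← add_mul, ← mul_assoc]
          gcongr
      _ = C₁ * t ^ (p - 1) * d := by rw [← ht']; ring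
      _ ≤ shellConst p lam Lam * t ^ (p - 1) * d := by
          unfold shellConst
          gcongr
          linarith
  · have hpow : ∀ x : E, ‖x‖ ≤ Lam * t → ‖‖x‖ ^ (p - 2) • x‖ ≤ Lam ^ (p - 1) * t ^ (p - 1) :=
      fun x hx ↦ by
        rw [norm_rpow_smul_self (by linarith), ← Real.mul_rpow hLam.le ht.le,
          show p - 2 + 1 = p - 1 by ring]
        exact Real.rpow_le_rpow (norm_nonneg x) hx (by linarith)
    calc _ ≤ ‖‖a‖ ^ (p - 2) • a‖ + ‖‖b‖ ^ (p - 2) • b‖ := norm_sub_le _ _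
      _ ≤ 2 * Lam ^ (p - 1) * t ^ (p - 1) := by linarith [hpow a ha, hpow b hb']
      _ = C₂ * t ^ (p - 1) * (lam / 2) := by simp only [C₂]; field_simp; ring
      _ ≤ C₂ * t ^ (p - 1) * d := by gcongr
      _ ≤ shellConst p lam Lam * t ^ (p - 1) * d := by
          unfold shellConst
          gcongr
          linarith

end

section Frobenius
attribute [local instance] Matrix.frobeniusNormedAddCommGroup

variable {l m n : ℕ}

-- The Frobenius norm is by definition that of `PiLp 2` of `PiLp 2`: `toE` is an isometry by `rfl`.
def toE (Q : Matrix (Fin m) (Fin n) ℝ) : PiLp 2 (fun _ : Fin m ↦ EuclideanSpace ℝ (Fin n)) :=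
  WithLp.toLp 2 fun i ↦ WithLp.toLp 2 (Q i)

theorem frobNorm_eq_norm (Q : Matrix (Fin m) (Fin n) ℝ) : frobNorm Q = ‖Q‖ := by
  rw [Matrix.frobenius_norm_def, frobNorm, Real.sqrt_eq_rpow]
  simp_rw [Real.norm_eq_abs, Real.rpow_two, sq_abs]

theorem frobNorm_eq_norm_toE (Q : Matrix (Fin m) (Fin n) ℝ) : frobNorm Q = ‖toE Q‖ :=
  frobNorm_eq_norm Q

theorem frobNorm_pos {Q : Matrix (Fin m) (Fin n) ℝ} (hQ : Q ≠ 0) : 0 < frobNorm Q := by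
  simpa only [frobNorm_eq_norm] using norm_pos_iff.mpr hQ

theorem frobNorm_nonneg (Q : Matrix (Fin m) (Fin n) ℝ) : 0 ≤ frobNorm Q :=
  Real.sqrt_nonneg _

theorem frobNorm_add_le (Q R : Matrix (Fin m) (Fin n) ℝ) :
    frobNorm (Q + R) ≤ frobNorm Q + frobNorm R := by
  simpa only [frobNorm_eq_norm] using norm_add_le Q R

theorem frobNorm_mul_le (Q : Matrix (Fin l) (Fin m) ℝ) (R : Matrix (Fin m) (Fin n) ℝ) :
    frobNorm (Q * R) ≤ frobNorm Q * frobNorm R := by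
  simpa only [frobNorm_eq_norm] using Matrix.frobenius_norm_mul Q R

theorem frobNorm_transpose (Q : Matrix (Fin m) (Fin n) ℝ) : frobNorm Qᵀ = frobNorm Q := by
  simpa only [frobNorm_eq_norm] using Matrix.frobenius_norm_transpose Q

theorem toE_pLapA (p : ℝ) (P : Matrix (Fin m) (Fin n) ℝ) :
    toE (pLapA p P) = ‖toE P‖ ^ (p - 2) • toE P := by
  rw [pLapA, frobNorm_eq_norm_toE]
  rfl

end Frobenius

theorem frobNorm_pLapA {p : ℝ} (hp : 1 < p) {m n : ℕ} (P : Matrix (Fin m) (Fin n) ℝ) :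
    frobNorm (pLapA p P) = frobNorm P ^ (p - 1) := by
  rw [frobNorm_eq_norm_toE, toE_pLapA, norm_rpow_smul_self (by linarith),
    ← frobNorm_eq_norm_toE]
  ring_nf

theorem frobNorm_pLapA_sub_le_of_mem_shell {p lam Lam t d : ℝ} (hp : 1 < p) (hlam : 0 < lam)
    (ht : 0 < t) {m n : ℕ} {P₁ P₂ : Matrix (Fin m) (Fin n) ℝ} (h₁ : frobNorm P₁ ≤ Lam * t)
    (h₂ : lam * t ≤ frobNorm P₂) (h₂' : frobNorm P₂ ≤ Lam * t)
    (h₁₂ : frobNorm (P₁ - P₂) ≤ t * d) :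
    frobNorm (pLapA p P₁ - pLapA p P₂) ≤ shellConst p lam Lam * t ^ (p - 1) * d := by
  simp only [frobNorm_eq_norm_toE] at *
  rw [show toE (pLapA p P₁ - pLapA p P₂) = toE (pLapA p P₁) - toE (pLapA p P₂) from rfl,
    toE_pLapA, toE_pLapA]
  exact norm_rpow_smul_self_sub_le_of_mem_shell hp hlam ht h₁ h₂ h₂' h₁₂

theorem frobNorm_le_sqrt_mul_of_frobNorm_mul_le {N m n : ℕ} (i₀ : Fin N)
    {T : Matrix (Fin m) (Fin n) ℝ} {Lam : ℝ} (hLam : 0 ≤ Lam)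
    (hT : ∀ Q : Matrix (Fin N) (Fin m) ℝ, frobNorm (Q * T) ≤ Lam * frobNorm Q) :
    frobNorm T ≤ Real.sqrt m * Lam := by
  have hrow : ∀ j, Real.sqrt (∑ k, T j k ^ 2) ≤ Lam := fun j ↦ by
    have h := hT (Matrix.single i₀ j 1)
    have h1 : frobNorm (Matrix.single i₀ j (1 : ℝ)) = 1 := by
      simp [frobNorm, Matrix.single_apply, ite_and]
    have h2 : frobNorm (Matrix.single i₀ j (1 : ℝ) * T) = Real.sqrt (∑ k, T j k ^ 2) := by
      rw [frobNorm, Finset.sum_eq_single i₀ (fun i _ hi ↦ by simp [hi]) (by simp)]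
      simp
    rwa [h1, h2, mul_one] at h
  calc frobNorm T ≤ Real.sqrt (∑ _j : Fin m, Lam ^ 2) :=
        Real.sqrt_le_sqrt (Finset.sum_le_sum fun j _ ↦ (Real.sqrt_le_iff.mp (hrow j)).2)
    _ = Real.sqrt m * Lam := by
        rw [Finset.sum_const, Finset.card_univ, Fintype.card_fin, nsmul_eq_mul,
          Real.sqrt_mul (Nat.cast_nonneg m), Real.sqrt_sq hLam]

theorem frobNorm_pLapAT_sub_le (p : ℝ) {N n : ℕ} (T₁ T₂ : Matrix (Fin n) (Fin n) ℝ)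
    (Q : Matrix (Fin N) (Fin n) ℝ) :
    frobNorm (pLapAT p T₁ Q - pLapAT p T₂ Q) ≤ frobNorm (pLapA p (Q * T₁)) * frobNorm (T₁ - T₂)
      + frobNorm (pLapA p (Q * T₁) - pLapA p (Q * T₂)) * frobNorm T₂ := by
  have hsplit : pLapAT p T₁ Q - pLapAT p T₂ Q
      = pLapA p (Q * T₁) * (T₁ - T₂)ᵀ + (pLapA p (Q * T₁) - pLapA p (Q * T₂)) * T₂ᵀ := by
    rw [pLapAT, pLapAT, Matrix.transpose_sub, Matrix.mul_sub, Matrix.sub_mul]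
    abel
  rw [hsplit, ← frobNorm_transpose (T₁ - T₂), ← frobNorm_transpose T₂]
  exact (frobNorm_add_le _ _).trans (add_le_add (frobNorm_mul_le _ _) (frobNorm_mul_le _ _))

theorem stmt0_general (p : ℝ) (hp : 1 < p) (n N : ℕ)
    (lam Lam : ℝ) (hlam : 0 < lam) (hlamLam : lam ≤ Lam) :
    ∃ c : ℝ, 0 < c ∧
      ∀ T₁ T₂ : Matrix (Fin n) (Fin n) ℝ,
        (∀ Q : Matrix (Fin N) (Fin n) ℝ,
          lam * frobNorm Q ≤ frobNorm (Q * T₁) ∧ frobNorm (Q * T₁) ≤ Lam * frobNorm Q) →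
        (∀ Q : Matrix (Fin N) (Fin n) ℝ,
          lam * frobNorm Q ≤ frobNorm (Q * T₂) ∧ frobNorm (Q * T₂) ≤ Lam * frobNorm Q) →
        ∀ Q : Matrix (Fin N) (Fin n) ℝ,
          frobNorm (pLapAT p T₁ Q - pLapAT p T₂ Q)
            ≤ c * frobNorm Q ^ (p - 1) * frobNorm (T₁ - T₂) := by
  have hLam : 0 < Lam := hlam.trans_le hlamLam
  have hC := shellConst_pos p hlam hLam
  refine ⟨Lam ^ (p - 1) + shellConst p lam Lam * (Real.sqrt n * Lam), by positivity, ?_⟩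
  intro T₁ T₂ h₁ h₂ Q
  rcases eq_or_ne Q 0 with rfl | hQ
  · simp [pLapAT, pLapA, frobNorm, Real.zero_rpow (by linarith : p - 1 ≠ 0)]
  obtain ⟨i₀⟩ : Nonempty (Fin N) := by
    by_contra hN
    exact hQ (Matrix.ext fun i ↦ (hN ⟨i⟩).elim)
  have hQpos := frobNorm_pos hQ
  have hT₂ := frobNorm_le_sqrt_mul_of_frobNorm_mul_le i₀ hLam.le fun R ↦ (h₂ R).2
  have hA₁ : frobNorm (pLapA p (Q * T₁)) ≤ Lam ^ (p - 1) * frobNorm Q ^ (p - 1) := by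
    rw [frobNorm_pLapA hp, ← Real.mul_rpow hLam.le (frobNorm_nonneg Q)]
    exact Real.rpow_le_rpow (frobNorm_nonneg _) (h₁ Q).2 (by linarith)
  have hA₁₂ := frobNorm_pLapA_sub_le_of_mem_shell hp hlam hQpos (h₁ Q).2 (h₂ Q).1 (h₂ Q).2
    (by rw [← Matrix.mul_sub]; exact frobNorm_mul_le Q (T₁ - T₂))
  calc _ ≤ _ := frobNorm_pLapAT_sub_le p T₁ T₂ Q
    _ ≤ Lam ^ (p - 1) * frobNorm Q ^ (p - 1) * frobNorm (T₁ - T₂)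
        + shellConst p lam Lam * frobNorm Q ^ (p - 1) * frobNorm (T₁ - T₂)
          * (Real.sqrt n * Lam) :=
      add_le_add (mul_le_mul_of_nonneg_right hA₁ (frobNorm_nonneg _))
        (mul_le_mul hA₁₂ hT₂ (frobNorm_nonneg _) ((frobNorm_nonneg _).trans hA₁₂))
    _ = _ := by ring

theorem stmt0 (p : ℝ) (hp : 1 < p) (n N : ℕ) (hn : 1 ≤ n) (hN : 1 ≤ N)
    (lam Lam : ℝ) (hlam : 0 < lam) (hlamLam : lam ≤ Lam) :
    ∃ c : ℝ, 0 < c ∧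
      ∀ T₁ T₂ : Matrix (Fin n) (Fin n) ℝ,
        (∀ Q : Matrix (Fin N) (Fin n) ℝ,
          lam * frobNorm Q ≤ frobNorm (Q * T₁) ∧ frobNorm (Q * T₁) ≤ Lam * frobNorm Q) →
        (∀ Q : Matrix (Fin N) (Fin n) ℝ,
          lam * frobNorm Q ≤ frobNorm (Q * T₂) ∧ frobNorm (Q * T₂) ≤ Lam * frobNorm Q) →
        ∀ Q : Matrix (Fin N) (Fin n) ℝ,
          frobNorm (pLapAT p T₁ Q - pLapAT p T₂ Q)
            ≤ c * frobNorm Q ^ (p - 1) * frobNorm (T₁ - T₂) :=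
  stmt0_general p hp n N lam Lam hlam hlamLam
end

section
/- Let ω : (0,1] → (0,∞) be a non-decreasing function of class C¹ on (0,1] such that ∫_0^1 ω(r)/r dr = ∞, and suppose that the limit lim_{r→0⁺} r ω′(r)/ω(r) exists. Then there exists δ ∈ (0,1) such that the function r ↦ ω(r)/(r ω̄(r)) is non-increasing on (0, δ), where ω̄(r) = ∫_r^1 ω(ρ)/ρ dρ. -/
/-!
If `r ω' ≥ α ω` near `0` for some `α > 0`, then `∫ₐ^b ω/r ≤ (ω b - ω a)/α ≤ ω b/α` uniformly
in `a`, contradicting the divergence of `∫₀¹ ω/r`. Taking `α = 1/4`, the limit of `r ω'/ω` is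
`< 1/2`, so `r ω' ≤ ω/2` near `0`. Since `ω̄' = -ω/r`, the derivative of `ω/(r ω̄)` has numerator
`(r ω' - ω) ω̄ + ω² ≤ ω (ω - ω̄/2)`, which is `≤ 0` as soon as `ω̄ ≥ 2 ω 1 ≥ 2 ω`.
-/

open MeasureTheory Filter Set Topology intervalIntegral

theorem exists_mem_Ioo_forall_Ioo_of_eventually {p : ℝ → Prop} (h : ∀ᶠ r in 𝓝[>] 0, p r) :
    ∃ δ ∈ Ioo (0 : ℝ) 1, ∀ r ∈ Ioo 0 δ, p r := by
  obtain ⟨u, hu, hsub⟩ := (mem_nhdsGT_iff_exists_Ioo_subset' one_pos).mp h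
  refine ⟨min u (1 / 2), ⟨lt_min hu one_half_pos, by linarith [min_le_right u (1 / 2)]⟩, ?_⟩
  exact fun r hr => hsub ⟨hr.1, hr.2.trans_le (min_le_left _ _)⟩

theorem integral_div_le_sub_div_of_mul_le_mul_deriv {ω ω' : ℝ → ℝ} {a b α : ℝ}
    (ha : 0 < a) (hab : a ≤ b) (hα : 0 < α) (hω : ContinuousOn ω (Icc a b))
    (hderiv : ∀ r ∈ Ioo a b, HasDerivAt ω (ω' r) r)
    (hle : ∀ r ∈ Ioo a b, α * ω r ≤ r * ω' r) :
    ∫ r in a..b, ω r / r ≤ (ω b - ω a) / α := by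
  have hint : IntegrableOn (fun r => α * (ω r / r)) (Icc a b) :=
    (continuousOn_const.mul
      (hω.div continuousOn_id fun r hr => (ha.trans_le hr.1).ne')).integrableOn_Icc
  have key := integral_le_sub_of_hasDeriv_right_of_le hab hω
    (fun r hr => (hderiv r hr).hasDerivWithinAt) hint fun r hr => by
      rw [← mul_div_assoc, div_le_iff₀ (ha.trans hr.1)]
      linarith [hle r hr]
  rw [intervalIntegral.integral_const_mul] at key
  rw [le_div_iff₀ hα]
  linarith

theorem not_eventually_mul_le_mul_deriv {ω ω' : ℝ → ℝ}
    (hωpos : ∀ r ∈ Ioo (0 : ℝ) 1, 0 < ω r) (hω : ContinuousOn ω (Ioc 0 1))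
    (hderiv : ∀ r ∈ Ioo (0 : ℝ) 1, HasDerivAt ω (ω' r) r)
    (hdiv : Tendsto (fun a => ∫ r in a..1, ω r / r) (𝓝[>] 0) atTop) {α : ℝ} (hα : 0 < α) :
    ¬ ∀ᶠ r in 𝓝[>] 0, α * ω r ≤ r * ω' r := by
  intro h
  obtain ⟨η, hη, hle⟩ := exists_mem_Ioo_forall_Ioo_of_eventually h
  have hint : ∀ a b : ℝ, 0 < a → a ≤ b → b ≤ 1 →
      IntervalIntegrable (fun r => ω r / r) volume a b :=
    fun a b ha hab hb => ContinuousOn.intervalIntegrable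
      ((hω.div continuousOn_id fun r hr => hr.1.ne').mono
        (by rw [uIcc_of_le hab]; exact Icc_subset_Ioc ha hb))
  have hbound : ∀ a ∈ Ioo 0 η, ∫ r in a..1, ω r / r ≤ ω η / α + ∫ r in η..1, ω r / r := by
    intro a ha
    have hωa : 0 < ω a := hωpos a ⟨ha.1, ha.2.trans hη.2⟩
    calc ∫ r in a..1, ω r / r = (∫ r in a..η, ω r / r) + ∫ r in η..1, ω r / r :=
          (integral_add_adjacent_intervals (hint a η ha.1 ha.2.le hη.2.le)
            (hint η 1 hη.1 hη.2.le le_rfl)).symm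
      _ ≤ (ω η - ω a) / α + ∫ r in η..1, ω r / r := by
          gcongr
          exact integral_div_le_sub_div_of_mul_le_mul_deriv ha.1 ha.2.le hα
            (hω.mono (Icc_subset_Ioc ha.1 hη.2.le))
            (fun r hr => hderiv r ⟨ha.1.trans hr.1, hr.2.trans hη.2⟩)
            (fun r hr => hle r ⟨ha.1.trans hr.1, hr.2⟩)
      _ ≤ ω η / α + ∫ r in η..1, ω r / r := by gcongr; linarith
  obtain ⟨a, hlarge, ha⟩ := ((hdiv.eventually_gt_atTop _).and (Ioo_mem_nhdsGT hη.1)).exists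
  exact (hbound a ha).not_gt hlarge

theorem hasDerivAt_div_mul_integral_div {ω ω' : ℝ → ℝ} (hω : ContinuousOn ω (Ioc 0 1))
    {r : ℝ} (hr : r ∈ Ioo (0 : ℝ) 1) (hderiv : HasDerivAt ω (ω' r) r)
    (hψ : ∫ ρ in r..1, ω ρ / ρ ≠ 0) :
    HasDerivAt (fun u => ω u / (u * ∫ ρ in u..1, ω ρ / ρ))
      (((r * ω' r - ω r) * (∫ ρ in r..1, ω ρ / ρ) + ω r ^ 2) /
        (r * ∫ ρ in r..1, ω ρ / ρ) ^ 2) r := by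
  have hf : ContinuousOn (fun ρ => ω ρ / ρ) (Ioc 0 1) :=
    hω.div continuousOn_id fun ρ hρ => hρ.1.ne'
  have hψ' : HasDerivAt (fun u => ∫ ρ in u..1, ω ρ / ρ) (-(ω r / r)) r :=
    integral_hasDerivAt_left
      (hf.mono (by rw [uIcc_of_le hr.2.le]; exact Icc_subset_Ioc hr.1 le_rfl)).intervalIntegrable
      ((hf.mono Ioo_subset_Ioc_self).stronglyMeasurableAtFilter isOpen_Ioo r hr)
      (hf.continuousAt (Ioc_mem_nhds hr.1 hr.2))
  refine (hderiv.fun_div ((hasDerivAt_id' r).fun_mul hψ') (mul_ne_zero hr.1.ne' hψ)).congr_deriv ?_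
  rw [mul_neg, mul_div_cancel₀ _ hr.1.ne']
  ring

theorem antitoneOn_div_mul_integral_div {ω ω' : ℝ → ℝ} {δ : ℝ} (hδ : δ ≤ 1)
    (hω : ContinuousOn ω (Ioc 0 1)) (hderiv : ∀ r ∈ Ioo 0 δ, HasDerivAt ω (ω' r) r)
    (hωpos : ∀ r ∈ Ioo 0 δ, 0 < ω r)
    (hsmall : ∀ r ∈ Ioo 0 δ, r * ω' r ≤ ω r / 2 ∧ 2 * ω r ≤ ∫ ρ in r..1, ω ρ / ρ) :
    AntitoneOn (fun r => ω r / (r * ∫ ρ in r..1, ω ρ / ρ)) (Ioo 0 δ) := by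
  have hψpos : ∀ r ∈ Ioo 0 δ, 0 < ∫ ρ in r..1, ω ρ / ρ := fun r hr =>
    (by linarith [hωpos r hr] : 0 < 2 * ω r).trans_le (hsmall r hr).2
  have hF := fun r hr => hasDerivAt_div_mul_integral_div hω (Ioo_subset_Ioo_right hδ hr)
    (hderiv r hr) (hψpos r hr).ne'
  refine antitoneOn_of_hasDerivWithinAt_nonpos (convex_Ioo 0 δ)
    (fun r hr => (hF r hr).continuousAt.continuousWithinAt)
    (by rw [interior_Ioo]; exact fun r hr => (hF r hr).hasDerivWithinAt) ?_
  rw [interior_Ioo]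
  intro r hr
  refine div_nonpos_of_nonpos_of_nonneg ?_ (sq_nonneg _)
  nlinarith [hsmall r hr, hψpos r hr, hωpos r hr]

theorem stmt8_general (ω ω' : ℝ → ℝ)
    (hωpos : ∀ r ∈ Set.Ioc (0 : ℝ) 1, 0 < ω r)
    (hωmono : MonotoneOn ω (Set.Ioc 0 1))
    (hderiv : ∀ r ∈ Set.Ioc (0 : ℝ) 1, HasDerivWithinAt ω (ω' r) (Set.Ioc 0 1) r)
    (hdiv : Tendsto (fun a => ∫ r in a..1, ω r / r) (nhdsWithin 0 (Set.Ioi 0)) atTop)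
    (hL : ∃ L : ℝ,
      Tendsto (fun r => r * ω' r / ω r) (nhdsWithin 0 (Set.Ioi 0)) (nhds L)) :
    ∃ δ ∈ Set.Ioo (0 : ℝ) 1,
      AntitoneOn (fun r => ω r / (r * ∫ ρ in r..1, ω ρ / ρ)) (Set.Ioo 0 δ) := by
  obtain ⟨L, hLt⟩ := hL
  have hω : ContinuousOn ω (Ioc 0 1) := fun r hr => (hderiv r hr).continuousWithinAt
  have hderivAt : ∀ r ∈ Ioo (0 : ℝ) 1, HasDerivAt ω (ω' r) r := fun r hr =>
    (hderiv r (Ioo_subset_Ioc_self hr)).hasDerivAt (Ioc_mem_nhds hr.1 hr.2)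
  have hωpos' : ∀ r ∈ Ioo (0 : ℝ) 1, 0 < ω r := fun r hr => hωpos r (Ioo_subset_Ioc_self hr)
  have hnear0 : ∀ᶠ r in 𝓝[>] 0, r ∈ Ioo (0 : ℝ) 1 := Ioo_mem_nhdsGT one_pos
  have hL0 : L < 1 / 2 := by
    by_contra! hL
    refine not_eventually_mul_le_mul_deriv hωpos' hω hderivAt hdiv
      (by norm_num : (0 : ℝ) < 1 / 4) ?_
    filter_upwards [hLt.eventually_const_lt (by linarith : 1 / 4 < L), hnear0] with r hr hr01
    exact ((lt_div_iff₀ (hωpos' r hr01)).mp hr).le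
  have hsmall : ∀ᶠ r in 𝓝[>] 0, r * ω' r ≤ ω r / 2 ∧ 2 * ω r ≤ ∫ ρ in r..1, ω ρ / ρ := by
    filter_upwards [hLt.eventually_lt_const hL0, hdiv.eventually_ge_atTop (2 * ω 1), hnear0]
      with r hr hψ hr01
    have hωr1 : ω r ≤ ω 1 :=
      hωmono (Ioo_subset_Ioc_self hr01) (right_mem_Ioc.mpr one_pos) hr01.2.le
    exact ⟨by linarith [(div_lt_iff₀ (hωpos' r hr01)).mp hr], by linarith⟩
  obtain ⟨δ, hδ, hδsmall⟩ := exists_mem_Ioo_forall_Ioo_of_eventually hsmall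
  have hsub : Ioo 0 δ ⊆ Ioo (0 : ℝ) 1 := Ioo_subset_Ioo_right hδ.2.le
  exact ⟨δ, hδ, antitoneOn_div_mul_integral_div hδ.2.le hω (fun r hr => hderivAt r (hsub hr))
    (fun r hr => hωpos' r (hsub hr)) hδsmall⟩

theorem stmt8 (ω ω' : ℝ → ℝ)
    (hωpos : ∀ r ∈ Set.Ioc (0 : ℝ) 1, 0 < ω r)
    (hωmono : MonotoneOn ω (Set.Ioc 0 1))
    (hderiv : ∀ r ∈ Set.Ioc (0 : ℝ) 1, HasDerivWithinAt ω (ω' r) (Set.Ioc 0 1) r)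
    (hω'cont : ContinuousOn ω' (Set.Ioc 0 1))
    (hdiv : Tendsto (fun a => ∫ r in a..1, ω r / r) (nhdsWithin 0 (Set.Ioi 0)) atTop)
    (hL : ∃ L : ℝ,
      Tendsto (fun r => r * ω' r / ω r) (nhdsWithin 0 (Set.Ioi 0)) (nhds L)) :
    ∃ δ ∈ Set.Ioo (0 : ℝ) 1,
      AntitoneOn (fun r => ω r / (r * ∫ ρ in r..1, ω ρ / ρ)) (Set.Ioo 0 δ) :=
  stmt8_general ω ω' hωpos hωmono hderiv hdiv hL
end

section
/- Let ω, η : (0,1] → (0,∞) be continuous non-decreasing functions with lim_{r→0⁺} ω(r) = 0 and lim_{r→0⁺} η(r) = 0, and define ω₁(r) = inf_{s ∈ [r,1]} ω(s)/η(s) for r ∈ (0,1]. Then lim_{r→0⁺} ω(r)/ω₁(r) = 0. -/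
/-!
Take a cut-off `d` with `η d < ε` and split `[r, 1]` at `d`. On `[r, d]` monotonicity gives
`ω s / η s ≥ ω r / η d`, on `[d, 1]` it gives `ω s / η s ≥ ω d / η 1`; hence
`ω r / ω₁ r ≤ max (η d) (ω r * η 1 / ω d)`, and the second term tends to `0` with `r`.
-/

open Filter Set Topology

section

variable {ω η : ℝ → ℝ} {r d b : ℝ}

theorem min_div_le_div_of_monotoneOn (hω : MonotoneOn ω (Icc r b)) (hη : MonotoneOn η (Icc r b))
    (hωr : 0 < ω r) (hηpos : ∀ s ∈ Icc r b, 0 < η s) (hrd : r ≤ d) (hdb : d ≤ b)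
    {s : ℝ} (hs : s ∈ Icc r b) : min (ω r / η d) (ω d / η b) ≤ ω s / η s := by
  have hr : r ∈ Icc r b := ⟨le_rfl, hs.1.trans hs.2⟩
  have hd : d ∈ Icc r b := ⟨hrd, hdb⟩
  have hb : b ∈ Icc r b := ⟨hr.2, le_rfl⟩
  have hωs : 0 ≤ ω s := hωr.le.trans (hω hr hs hs.1)
  rcases le_total s d with hsd | hds
  · exact min_le_of_left_le <| div_le_div₀ hωs (hω hr hs hs.1) (hηpos s hs) (hη hs hd hsd)
  · exact min_le_of_right_le <| div_le_div₀ hωs (hω hd hs hds) (hηpos s hs) (hη hs hb hs.2)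

theorem div_lt_csInf_image_div (hω : MonotoneOn ω (Icc r b)) (hη : MonotoneOn η (Icc r b))
    (hωr : 0 < ω r) (hηpos : ∀ s ∈ Icc r b, 0 < η s) (hrd : r ≤ d) (hdb : d ≤ b)
    {ε : ℝ} (hηd : η d < ε) (hωr_lt : ω r < ε * ω d / η b) :
    ω r / ε < sInf ((fun s => ω s / η s) '' Icc r b) := by
  have hηd_pos : 0 < η d := hηpos d ⟨hrd, hdb⟩
  have hηb_pos : 0 < η b := hηpos b ⟨hrd.trans hdb, le_rfl⟩
  have hε : 0 < ε := hηd_pos.trans hηd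
  have h_left : ω r / ε < ω r / η d := div_lt_div_of_pos_left hωr hηd_pos hηd
  have h_right : ω r / ε < ω d / η b := by
    rw [div_lt_iff₀ hε, div_mul_eq_mul_div, mul_comm]
    exact hωr_lt
  refine (lt_min h_left h_right).trans_le <| le_csInf ⟨_, mem_image_of_mem _ ⟨le_rfl, hrd.trans hdb⟩⟩ ?_
  rintro _ ⟨s, hs, rfl⟩
  exact min_div_le_div_of_monotoneOn hω hη hωr hηpos hrd hdb hs

end

theorem stmt15_general (ω η : ℝ → ℝ)
    (hωpos : ∀ r ∈ Set.Ioc (0 : ℝ) 1, 0 < ω r)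
    (hηpos : ∀ r ∈ Set.Ioc (0 : ℝ) 1, 0 < η r)
    (hωmono : MonotoneOn ω (Set.Ioc 0 1))
    (hηmono : MonotoneOn η (Set.Ioc 0 1))
    (hω0 : Tendsto ω (nhdsWithin 0 (Set.Ioi 0)) (nhds 0))
    (hη0 : Tendsto η (nhdsWithin 0 (Set.Ioi 0)) (nhds 0))
    (ω₁ : ℝ → ℝ)
    (hω₁ : ∀ r ∈ Set.Ioc (0 : ℝ) 1,
      ω₁ r = sInf ((fun s => ω s / η s) '' Set.Icc r 1)) :
    Tendsto (fun r => ω r / ω₁ r) (nhdsWithin 0 (Set.Ioi 0)) (nhds 0) := by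
  rw [Metric.tendsto_nhds]
  intro ε hε
  obtain ⟨d, hd, hηd⟩ := (Filter.Eventually.and (Ioc_mem_nhdsGT one_pos)
    (hη0.eventually (gt_mem_nhds hε))).exists
  have hη1 : 0 < η 1 := hηpos 1 ⟨one_pos, le_rfl⟩
  have hω_small : ∀ᶠ r in 𝓝[>] 0, ω r < ε * ω d / η 1 :=
    hω0.eventually (gt_mem_nhds (by have := hωpos d hd; positivity))
  filter_upwards [Ioc_mem_nhdsGT hd.1, hω_small] with r hr hωr_lt
  have hr1 : r ∈ Ioc (0 : ℝ) 1 := ⟨hr.1, hr.2.trans hd.2⟩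
  have hsub : Icc r 1 ⊆ Ioc 0 1 := fun s hs => ⟨hr.1.trans_le hs.1, hs.2⟩
  have hωr := hωpos r hr1
  have hlt : ω r / ε < ω₁ r := hω₁ r hr1 ▸ div_lt_csInf_image_div (hωmono.mono hsub)
    (hηmono.mono hsub) hωr (fun s hs => hηpos s (hsub hs)) hr.2 hd.2 hηd hωr_lt
  have hω₁r : 0 < ω₁ r := (div_pos hωr hε).trans hlt
  rw [Real.dist_eq, sub_zero, abs_of_pos (div_pos hωr hω₁r), div_lt_iff₀ hω₁r]
  rwa [div_lt_iff₀ hε, mul_comm] at hlt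

theorem stmt15 (ω η : ℝ → ℝ)
    (hωpos : ∀ r ∈ Set.Ioc (0 : ℝ) 1, 0 < ω r)
    (hηpos : ∀ r ∈ Set.Ioc (0 : ℝ) 1, 0 < η r)
    (hωmono : MonotoneOn ω (Set.Ioc 0 1))
    (hηmono : MonotoneOn η (Set.Ioc 0 1))
    (hωcont : ContinuousOn ω (Set.Ioc 0 1))
    (hηcont : ContinuousOn η (Set.Ioc 0 1))
    (hω0 : Tendsto ω (nhdsWithin 0 (Set.Ioi 0)) (nhds 0))
    (hη0 : Tendsto η (nhdsWithin 0 (Set.Ioi 0)) (nhds 0))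
    (ω₁ : ℝ → ℝ)
    (hω₁ : ∀ r ∈ Set.Ioc (0 : ℝ) 1,
      ω₁ r = sInf ((fun s => ω s / η s) '' Set.Icc r 1)) :
    Tendsto (fun r => ω r / ω₁ r) (nhdsWithin 0 (Set.Ioi 0)) (nhds 0) :=
  stmt15_general ω η hωpos hηpos hωmono hηmono hω0 hη0 ω₁ hω₁
end

section
/- Let β ≥ 0, c_ω ≥ 1, and let ω : (0,1] → (0,∞) be a continuous non-decreasing function satisfying ω(r) ≤ c_ω θ^{−β} ω(θr) for all θ ∈ (0,1) and r ∈ (0,1], and the Dini condition ∫_0^1 ω(r)/r dr < ∞. Then there exist a continuous non-decreasing function ω₁ : (0,1] → (0,∞) and a constant c > 0 such that: (i) c ω(r) ≤ ω₁(r) for all r ∈ (0,1]; (ii) ω₁(r) ≤ c_ω θ^{−β} ω₁(θr) for all θ ∈ (0,1) and r ∈ (0,1]; (iii) ∫_0^1 ω₁(r)/r dr < ∞; (iv) lim_{r→0⁺} (ω(r)/ω₁(r)) ∫_r^1 ω₁(s)/s ds = 0. -/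
open MeasureTheory Filter Set Topology Asymptotics

/-!
Put `W r = ∫₀ʳ ω(t)/t dt` and let `ω₁ r = inf_{s ∈ [r, 1]} ω(s)/√(W s)`. Dividing by the
nondecreasing `√W` and then passing to the running infimum both preserve the
almost-monotonicity of `ω(r)/r^β` (this is where `β ≥ 0` and `c_ω ≥ 1` enter), the infimum
makes `ω₁` nondecreasing, and `ω / √(W 1) ≤ ω₁`. Since `ω₁(r)/r ≤ ω(r)/(r √(W r)) = (2 √W)'(r)`,
the Dini integral of `ω₁` is finite. Finally `√(W r) → 0` and `ω r ≤ 2 W(2r) → 0` give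
`ω = o(ω₁)` at `0⁺`, while `∫_r^1 ω₁(s)/s ds` stays bounded.
-/

noncomputable def runningInf (f : ℝ → ℝ) (b r : ℝ) : ℝ := sInf (f '' Icc r b)

section RunningInf

variable {f : ℝ → ℝ} {a b r : ℝ}

lemma le_runningInf {c : ℝ} (hr : r ≤ b) (h : ∀ s ∈ Icc r b, c ≤ f s) :
    c ≤ runningInf f b r :=
  le_csInf ((nonempty_Icc.2 hr).image f) (forall_mem_image.2 h)

lemma runningInf_le (hf : ∀ t ∈ Ioc a b, 0 ≤ f t) (hr : r ∈ Ioc a b) {s : ℝ}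
    (hs : s ∈ Icc r b) : runningInf f b r ≤ f s :=
  csInf_le ⟨0, forall_mem_image.2 fun t ht => hf t ⟨hr.1.trans_le ht.1, ht.2⟩⟩
    (mem_image_of_mem f hs)

lemma monotoneOn_runningInf (hf : ∀ t ∈ Ioc a b, 0 ≤ f t) :
    MonotoneOn (runningInf f b) (Ioc a b) := fun _ hx _ hy hxy =>
  le_runningInf hy.2 fun _ hs => runningInf_le hf hx ⟨hxy.trans hs.1, hs.2⟩

lemma runningInf_pos (hf : ContinuousOn f (Ioc a b)) (hpos : ∀ t ∈ Ioc a b, 0 < f t)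
    (hr : r ∈ Ioc a b) : 0 < runningInf f b r := by
  have hsub : Icc r b ⊆ Ioc a b := fun t ht => ⟨hr.1.trans_le ht.1, ht.2⟩
  obtain ⟨s, hs, heq⟩ := isCompact_Icc.exists_sInf_image_eq (nonempty_Icc.2 hr.2) (hf.mono hsub)
  exact (heq ▸ hpos s (hsub hs) : 0 < sInf (f '' Icc r b))

lemma continuousOn_runningInf_Icc (hf : ContinuousOn f (Icc a b)) :
    ContinuousOn (runningInf f b) (Icc a b) := by
  rcases lt_or_ge b a with hba | hab
  · simp [Icc_eq_empty_of_lt hba]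
  -- Clamping `max x t` into `[a, b]` turns the running infimum into an infimum over the fixed
  -- compact set `[a, b]` of a jointly continuous function.
  set F : ℝ → ℝ → ℝ := fun x t => f (max a (min b (max x t)))
  have hF : Continuous ↿F :=
    hf.comp_continuous (by fun_prop) fun _ => ⟨le_max_left _ _, max_le hab (min_le_left _ _)⟩
  refine ((isCompact_Icc (a := a) (b := b)).continuous_sInf hF).continuousOn.congr
    fun x hx => ?_
  show sInf (f '' Icc x b) = sInf (F x '' Icc a b)
  congr 1
  ext y
  simp only [F, mem_image, mem_Icc]
  constructor
  · rintro ⟨t, ⟨hxt, htb⟩, rfl⟩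
    exact ⟨t, ⟨hx.1.trans hxt, htb⟩, by grind⟩
  · rintro ⟨t, ⟨hat, htb⟩, rfl⟩
    exact ⟨_, ⟨by grind, by grind⟩, rfl⟩

lemma continuousOn_runningInf (hf : ContinuousOn f (Ioc a b)) :
    ContinuousOn (runningInf f b) (Ioc a b) := by
  intro r hr
  have ha' : a < (a + r) / 2 := by linarith [hr.1]
  have hr' : (a + r) / 2 < r := by linarith [hr.1]
  have hcont := continuousOn_runningInf_Icc (hf.mono fun t ht => ⟨ha'.trans_le ht.1, ht.2⟩)
    r ⟨hr'.le, hr.2⟩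
  refine hcont.mono_of_mem_nhdsWithin ?_
  filter_upwards [self_mem_nhdsWithin, mem_nhdsWithin_of_mem_nhds (Ioi_mem_nhds hr')]
    with s hs hs' using ⟨hs'.le, hs.2⟩

end RunningInf

/-- `f r / r ^ β ≤ C * f s / s ^ β` for `0 < s < r ≤ 1`, written with `s = θ * r`. -/
def AlmostDecreasingDivRpow (C β : ℝ) (f : ℝ → ℝ) : Prop :=
  ∀ θ ∈ Ioo (0 : ℝ) 1, ∀ r ∈ Ioc (0 : ℝ) 1, f r ≤ C * θ ^ (-β) * f (θ * r)

lemma mul_mem_Ioc_of_mem_Ioo {θ r : ℝ} (hθ : θ ∈ Ioo (0 : ℝ) 1) (hr : r ∈ Ioc (0 : ℝ) 1) :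
    θ * r ∈ Ioc (0 : ℝ) 1 :=
  ⟨mul_pos hθ.1 hr.1, (mul_le_of_le_one_left hr.1.le hθ.2.le).trans hr.2⟩

namespace AlmostDecreasingDivRpow

variable {C β : ℝ} {f : ℝ → ℝ}

lemma div {g : ℝ → ℝ} (hf : AlmostDecreasingDivRpow C β f)
    (hf0 : ∀ r ∈ Ioc (0 : ℝ) 1, 0 ≤ f r) (hg : ∀ r ∈ Ioc (0 : ℝ) 1, 0 < g r)
    (hgm : MonotoneOn g (Ioc 0 1)) :
    AlmostDecreasingDivRpow C β (fun r => f r / g r) := by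
  intro θ hθ r hr
  have hθr := mul_mem_Ioc_of_mem_Ioo hθ hr
  calc f r / g r ≤ C * θ ^ (-β) * f (θ * r) / g r :=
        div_le_div_of_nonneg_right (hf θ hθ r hr) (hg r hr).le
    _ ≤ C * θ ^ (-β) * f (θ * r) / g (θ * r) :=
        div_le_div_of_nonneg_left ((hf0 r hr).trans (hf θ hθ r hr)) (hg _ hθr)
          (hgm hθr hr (mul_le_of_le_one_left hr.1.le hθ.2.le))
    _ = C * θ ^ (-β) * (f (θ * r) / g (θ * r)) := mul_div_assoc _ _ _

lemma runningInf (hf : AlmostDecreasingDivRpow C β f) (hf0 : ∀ r ∈ Ioc (0 : ℝ) 1, 0 ≤ f r)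
    (hβ : 0 ≤ β) (hC : 1 ≤ C) : AlmostDecreasingDivRpow C β (runningInf f 1) := by
  intro θ hθ r hr
  have hθr := mul_mem_Ioc_of_mem_Ioo hθ hr
  have hK : 1 ≤ C * θ ^ (-β) := one_le_mul_of_one_le_of_one_le hC
    (Real.one_le_rpow_of_pos_of_le_one_of_nonpos hθ.1 hθ.2.le (neg_nonpos.2 hβ))
  suffices h : ∀ s ∈ Icc (θ * r) 1, _root_.runningInf f 1 r ≤ C * θ ^ (-β) * f s by
    rw [← div_le_iff₀' (by linarith)]
    exact le_runningInf hθr.2 fun s hs => (div_le_iff₀' (by linarith)).2 (h s hs)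
  intro s hs
  have hs' : s ∈ Ioc (0 : ℝ) 1 := ⟨hθr.1.trans_le hs.1, hs.2⟩
  rcases le_or_gt r s with hrs | hsr
  · calc _root_.runningInf f 1 r ≤ f s := runningInf_le hf0 hr ⟨hrs, hs.2⟩
      _ ≤ C * θ ^ (-β) * f s := le_mul_of_one_le_left (hf0 s hs') hK
  · have hsr' : s / r ∈ Ioo (0 : ℝ) 1 := ⟨div_pos hs'.1 hr.1, (div_lt_one hr.1).2 hsr⟩
    have hθsr : θ ≤ s / r := (le_div_iff₀ hr.1).2 hs.1
    calc _root_.runningInf f 1 r ≤ f r := runningInf_le hf0 hr ⟨le_rfl, hr.2⟩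
      _ ≤ C * (s / r) ^ (-β) * f (s / r * r) := hf _ hsr' r hr
      _ = C * (s / r) ^ (-β) * f s := by rw [div_mul_cancel₀ _ hr.1.ne']
      _ ≤ C * θ ^ (-β) * f s := mul_le_mul_of_nonneg_right (mul_le_mul_of_nonneg_left
          (Real.rpow_le_rpow_of_nonpos hθ.1 hθsr (neg_nonpos.2 hβ)) (by linarith)) (hf0 s hs')

end AlmostDecreasingDivRpow

lemma isLittleO_runningInf_div {ω h : ℝ → ℝ} (hωpos : ∀ r ∈ Ioc (0 : ℝ) 1, 0 < ω r)
    (hωmono : MonotoneOn ω (Ioc 0 1)) (hω : Tendsto ω (𝓝[>] 0) (𝓝 0))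
    (hpos : ∀ r ∈ Ioc (0 : ℝ) 1, 0 < h r) (hmono : MonotoneOn h (Ioc 0 1))
    (hh : Tendsto h (𝓝[>] 0) (𝓝 0)) :
    ω =o[𝓝[>] 0] runningInf (fun s => ω s / h s) 1 := by
  have h1 : (1 : ℝ) ∈ Ioc 0 1 := ⟨one_pos, le_rfl⟩
  have hIoc : Ioc (0 : ℝ) 1 ∈ 𝓝[>] 0 := Ioc_mem_nhdsGT one_pos
  refine IsLittleO.of_bound fun ε hε => ?_
  -- Split `[r, 1]` at a point `δ` with `h δ < ε`: below `δ` the quotient `ω s / h s` is large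
  -- because `h` is small, above `δ` because `ω r` is small compared with `ω δ`.
  obtain ⟨δ, hδ, hhδ⟩ : ∃ δ ∈ Ioc (0 : ℝ) 1, h δ < ε :=
    (Filter.Eventually.and hIoc (hh.eventually (gt_mem_nhds hε))).exists
  have hK : 0 < ε * ω δ / h 1 := by have := hωpos δ hδ; have := hpos 1 h1; positivity
  filter_upwards [hIoc, hω.eventually (gt_mem_nhds hK)] with r hr hωr
  rw [Real.norm_of_nonneg (hωpos r hr).le, Real.norm_of_nonneg (le_runningInf hr.2 fun s hs =>
    have hs' : s ∈ Ioc (0 : ℝ) 1 := ⟨hr.1.trans_le hs.1, hs.2⟩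
    (div_pos (hωpos s hs') (hpos s hs')).le), ← div_le_iff₀' hε]
  refine le_runningInf hr.2 fun s hs => ?_
  have hs' : s ∈ Ioc (0 : ℝ) 1 := ⟨hr.1.trans_le hs.1, hs.2⟩
  rw [div_le_div_iff₀ hε (hpos s hs')]
  rcases le_total s δ with hsδ | hδs
  · exact mul_le_mul (hωmono hr hs' hs.1) ((hmono hs' hδ hsδ).trans hhδ.le) (hpos s hs').le
      (hωpos s hs').le
  · have hh1 := hpos 1 h1
    calc ω r * h s ≤ ω r * h 1 := mul_le_mul_of_nonneg_left (hmono hs' h1 hs.2) (hωpos r hr).le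
      _ ≤ ε * ω δ := ((lt_div_iff₀ hh1).1 hωr).le
      _ ≤ ω s * ε := by
        rw [mul_comm]; exact mul_le_mul_of_nonneg_right (hωmono hδ hs' hδs) hε.le

lemma ContinuousOn.tendsto_nhdsGT {g : ℝ → ℝ} {a b : ℝ} (hab : a < b)
    (hg : ContinuousOn g (Icc a b)) : Tendsto g (𝓝[>] a) (𝓝 (g a)) := by
  rw [← nhdsWithin_Ioc_eq_nhdsGT hab]
  exact (hg a (left_mem_Icc.2 hab.le)).mono Ioc_subset_Icc_self

lemma integrableOn_div_sqrt_of_hasDerivAt {W q : ℝ → ℝ} {a b : ℝ}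
    (hW : ContinuousOn W (Icc a b)) (hpos : ∀ x ∈ Ioo a b, 0 < W x)
    (hderiv : ∀ x ∈ Ioo a b, HasDerivAt W (q x) x)
    (hq : ∀ x ∈ Ioo a b, 0 ≤ q x) : IntegrableOn (fun x => q x / √(W x)) (Ioc a b) := by
  refine intervalIntegral.integrableOn_deriv_of_nonneg (g := fun x => 2 * √(W x))
    (continuousOn_const.mul hW.sqrt) (fun x hx => ?_)
    (fun x hx => div_nonneg (hq x hx) (Real.sqrt_nonneg _))
  refine (((hderiv x hx).sqrt (hpos x hx).ne').const_mul 2).congr_deriv ?_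
  rw [← mul_div_assoc, mul_div_mul_left _ _ two_ne_zero]

noncomputable def diniIntegral (ω : ℝ → ℝ) (x : ℝ) : ℝ := ∫ t in (0 : ℝ)..x, ω t / t

section DiniIntegral

variable {ω : ℝ → ℝ} (hdini : IntegrableOn (fun r => ω r / r) (Ioc 0 1))
include hdini

lemma intervalIntegrable_div_of_dini {a b : ℝ} (ha : 0 ≤ a) (hab : a ≤ b) (hb : b ≤ 1) :
    IntervalIntegrable (fun t => ω t / t) volume a b :=
  (intervalIntegrable_iff_integrableOn_Ioc_of_le hab).2 (hdini.mono_set (Ioc_subset_Ioc ha hb))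

lemma continuousOn_diniIntegral : ContinuousOn (diniIntegral ω) (Icc 0 1) := by
  rw [← uIcc_of_le zero_le_one]
  exact intervalIntegral.continuousOn_primitive_interval
    (by rwa [uIcc_of_le zero_le_one, integrableOn_Icc_iff_integrableOn_Ioc])

lemma tendsto_diniIntegral : Tendsto (diniIntegral ω) (𝓝[>] 0) (𝓝 0) := by
  simpa [diniIntegral] using (continuousOn_diniIntegral hdini).tendsto_nhdsGT one_pos

lemma hasDerivAt_diniIntegral (hωcont : ContinuousOn ω (Ioc 0 1)) {x : ℝ}
    (hx : x ∈ Ioo (0 : ℝ) 1) : HasDerivAt (diniIntegral ω) (ω x / x) x := by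
  have hq : ContinuousOn (fun t => ω t / t) (Ioo 0 1) :=
    (hωcont.mono Ioo_subset_Ioc_self).div continuousOn_id fun t ht => ht.1.ne'
  exact intervalIntegral.integral_hasDerivAt_right
    (intervalIntegrable_div_of_dini hdini le_rfl hx.1.le hx.2.le)
    (hq.stronglyMeasurableAtFilter isOpen_Ioo x hx) (hq.continuousAt (Ioo_mem_nhds hx.1 hx.2))

variable (hω0 : ∀ r ∈ Ioc (0 : ℝ) 1, 0 ≤ ω r)
include hω0

lemma integral_div_le_diniIntegral {a b c : ℝ} (ha : 0 ≤ a) (hab : a ≤ b) (hbc : b ≤ c)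
    (hc : c ≤ 1) : ∫ t in a..b, ω t / t ≤ diniIntegral ω c :=
  intervalIntegral.integral_mono_interval ha hab hbc
    ((ae_restrict_iff' measurableSet_Ioc).2 (Eventually.of_forall fun t ht =>
      div_nonneg (hω0 t ⟨ht.1, ht.2.trans hc⟩) ht.1.le))
    (intervalIntegrable_div_of_dini hdini le_rfl (ha.trans (hab.trans hbc)) hc)

lemma monotoneOn_diniIntegral : MonotoneOn (diniIntegral ω) (Icc 0 1) := fun _ hx _ hy hxy =>
  integral_div_le_diniIntegral hdini hω0 le_rfl hx.1 hxy hy.2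

lemma monotoneOn_sqrt_diniIntegral : MonotoneOn (fun r => √(diniIntegral ω r)) (Ioc 0 1) :=
  fun _ hx _ hy hxy => Real.sqrt_le_sqrt
    (monotoneOn_diniIntegral hdini hω0 (Ioc_subset_Icc_self hx) (Ioc_subset_Icc_self hy) hxy)

variable (hωmono : MonotoneOn ω (Ioc 0 1))
include hωmono

lemma mul_sub_div_le_diniIntegral {a b : ℝ} (ha : 0 < a) (hab : a ≤ b) (hb : b ≤ 1) :
    ω a * (b - a) / b ≤ diniIntegral ω b := by
  have hle : ∀ t ∈ Icc a b, ω a / b ≤ ω t / t := fun t ht =>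
    div_le_div₀ (hω0 t ⟨ha.trans_le ht.1, ht.2.trans hb⟩)
      (hωmono ⟨ha, hab.trans hb⟩ ⟨ha.trans_le ht.1, ht.2.trans hb⟩ ht.1) (ha.trans_le ht.1) ht.2
  calc ω a * (b - a) / b = ∫ _ in a..b, ω a / b := by simp; ring
    _ ≤ ∫ t in a..b, ω t / t := intervalIntegral.integral_mono_on hab intervalIntegrable_const
        (intervalIntegrable_div_of_dini hdini ha.le hab hb) hle
    _ ≤ diniIntegral ω b := integral_div_le_diniIntegral hdini hω0 ha.le hab le_rfl hb

lemma tendsto_zero_of_dini : Tendsto ω (𝓝[>] 0) (𝓝 0) := by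
  have hdouble : Tendsto (fun r : ℝ => 2 * r) (𝓝[>] 0) (𝓝[>] 0) :=
    tendsto_nhdsWithin_of_tendsto_nhds_of_eventually_within _
      (by simpa using ((continuous_const_mul (2 : ℝ)).tendsto 0).mono_left nhdsWithin_le_nhds)
      (eventually_nhdsWithin_of_forall fun r (hr : 0 < r) => show 0 < 2 * r by positivity)
  have hlim : Tendsto (fun r => 2 * diniIntegral ω (2 * r)) (𝓝[>] 0) (𝓝 0) := by
    simpa using ((tendsto_diniIntegral hdini).comp hdouble).const_mul 2
  refine squeeze_zero' ?_ ?_ hlim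
  · filter_upwards [Ioc_mem_nhdsGT one_pos] with r hr using hω0 r hr
  · filter_upwards [Ioc_mem_nhdsGT one_half_pos] with r hr
    have := mul_sub_div_le_diniIntegral hdini hω0 hωmono hr.1 (b := 2 * r)
      (by linarith [hr.1]) (by linarith [hr.2])
    calc ω r = 2 * (ω r * (2 * r - r) / (2 * r)) := by field_simp [hr.1.ne']; ring
      _ ≤ 2 * diniIntegral ω (2 * r) := by linarith

end DiniIntegral

noncomputable def diniMajorant (ω : ℝ → ℝ) : ℝ → ℝ :=
  runningInf (fun r => ω r / √(diniIntegral ω r)) 1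

section DiniMajorant

variable {ω : ℝ → ℝ} (hdini : IntegrableOn (fun r => ω r / r) (Ioc 0 1))
  (hωpos : ∀ r ∈ Ioc (0 : ℝ) 1, 0 < ω r) (hωmono : MonotoneOn ω (Ioc 0 1))
include hdini hωpos hωmono

lemma sqrt_diniIntegral_pos {r : ℝ} (hr : r ∈ Ioc (0 : ℝ) 1) : 0 < √(diniIntegral ω r) := by
  have hr2 : r / 2 ∈ Ioc (0 : ℝ) 1 := ⟨half_pos hr.1, (half_le_self hr.1.le).trans hr.2⟩
  have hle := mul_sub_div_le_diniIntegral hdini (fun t ht => (hωpos t ht).le) hωmono hr2.1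
    (half_le_self hr.1.le) hr.2
  rw [sub_half] at hle
  have := hωpos _ hr2
  have := hr.1
  exact Real.sqrt_pos.2 (lt_of_lt_of_le (by positivity) hle)

lemma div_sqrt_diniIntegral_pos {r : ℝ} (hr : r ∈ Ioc (0 : ℝ) 1) :
    0 < ω r / √(diniIntegral ω r) :=
  div_pos (hωpos r hr) (sqrt_diniIntegral_pos hdini hωpos hωmono hr)

lemma monotoneOn_diniMajorant : MonotoneOn (diniMajorant ω) (Ioc 0 1) :=
  monotoneOn_runningInf fun _ hr => (div_sqrt_diniIntegral_pos hdini hωpos hωmono hr).le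

lemma inv_sqrt_diniIntegral_one_mul_le_diniMajorant {r : ℝ} (hr : r ∈ Ioc (0 : ℝ) 1) :
    (√(diniIntegral ω 1))⁻¹ * ω r ≤ diniMajorant ω r := by
  rw [inv_mul_eq_div]
  refine le_runningInf hr.2 fun s hs => ?_
  have hs' : s ∈ Ioc (0 : ℝ) 1 := ⟨hr.1.trans_le hs.1, hs.2⟩
  exact div_le_div₀ (hωpos s hs').le (hωmono hr hs' hs.1)
    (sqrt_diniIntegral_pos hdini hωpos hωmono hs')
    (monotoneOn_sqrt_diniIntegral hdini (fun t ht => (hωpos t ht).le) hs' ⟨one_pos, le_rfl⟩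
      hs.2)

lemma almostDecreasingDivRpow_diniMajorant {C β : ℝ} (hω : AlmostDecreasingDivRpow C β ω)
    (hβ : 0 ≤ β) (hC : 1 ≤ C) : AlmostDecreasingDivRpow C β (diniMajorant ω) :=
  (hω.div (fun r hr => (hωpos r hr).le)
    (fun _ hr => sqrt_diniIntegral_pos hdini hωpos hωmono hr)
    (monotoneOn_sqrt_diniIntegral hdini fun r hr => (hωpos r hr).le)).runningInf
      (fun _ hr => (div_sqrt_diniIntegral_pos hdini hωpos hωmono hr).le) hβ hC

lemma isLittleO_diniMajorant : ω =o[𝓝[>] 0] diniMajorant ω := by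
  have hω0 : ∀ r ∈ Ioc (0 : ℝ) 1, 0 ≤ ω r := fun r hr => (hωpos r hr).le
  refine isLittleO_runningInf_div hωpos hωmono (tendsto_zero_of_dini hdini hω0 hωmono)
    (fun _ hr => sqrt_diniIntegral_pos hdini hωpos hωmono hr)
    (monotoneOn_sqrt_diniIntegral hdini hω0) ?_
  simpa [Function.comp_def] using
    (Real.continuous_sqrt.tendsto 0).comp (tendsto_diniIntegral hdini)

variable (hωcont : ContinuousOn ω (Ioc 0 1))
include hωcont

lemma continuousOn_div_sqrt_diniIntegral :
    ContinuousOn (fun r => ω r / √(diniIntegral ω r)) (Ioc 0 1) :=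
  hωcont.div ((continuousOn_diniIntegral hdini).mono Ioc_subset_Icc_self).sqrt fun _ hr =>
    (sqrt_diniIntegral_pos hdini hωpos hωmono hr).ne'

lemma diniMajorant_pos {r : ℝ} (hr : r ∈ Ioc (0 : ℝ) 1) : 0 < diniMajorant ω r :=
  runningInf_pos (continuousOn_div_sqrt_diniIntegral hdini hωpos hωmono hωcont)
    (fun _ hs => div_sqrt_diniIntegral_pos hdini hωpos hωmono hs) hr

lemma continuousOn_diniMajorant : ContinuousOn (diniMajorant ω) (Ioc 0 1) :=
  continuousOn_runningInf (continuousOn_div_sqrt_diniIntegral hdini hωpos hωmono hωcont)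

lemma integrableOn_diniMajorant_div :
    IntegrableOn (fun r => diniMajorant ω r / r) (Ioc 0 1) := by
  have hω0 : ∀ r ∈ Ioc (0 : ℝ) 1, 0 ≤ ω r := fun r hr => (hωpos r hr).le
  have hbound := integrableOn_div_sqrt_of_hasDerivAt (continuousOn_diniIntegral hdini)
    (fun x hx => Real.sqrt_pos.1 (sqrt_diniIntegral_pos hdini hωpos hωmono ⟨hx.1, hx.2.le⟩))
    (fun x hx => hasDerivAt_diniIntegral hdini hωcont hx)
    (fun x hx => div_nonneg (hω0 x ⟨hx.1, hx.2.le⟩) hx.1.le)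
  refine hbound.mono' (((continuousOn_diniMajorant hdini hωpos hωmono hωcont).div
    continuousOn_id fun r hr => hr.1.ne').aestronglyMeasurable measurableSet_Ioc)
    ((ae_restrict_iff' measurableSet_Ioc).2 (Eventually.of_forall fun r hr => ?_))
  rw [Real.norm_of_nonneg
    (div_nonneg (diniMajorant_pos hdini hωpos hωmono hωcont hr).le hr.1.le), div_right_comm]
  exact div_le_div_of_nonneg_right (runningInf_le
    (fun _ hs => (div_sqrt_diniIntegral_pos hdini hωpos hωmono hs).le) hr ⟨le_rfl, hr.2⟩) hr.1.le

lemma tendsto_div_diniMajorant_mul_integral :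
    Tendsto (fun r => ω r / diniMajorant ω r * ∫ s in r..1, diniMajorant ω s / s) (𝓝[>] 0)
      (𝓝 0) := by
  have hint : Tendsto (fun r => ∫ s in r..1, diniMajorant ω s / s) (𝓝[>] 0)
      (𝓝 (∫ s in (0 : ℝ)..1, diniMajorant ω s / s)) := by
    refine ContinuousOn.tendsto_nhdsGT one_pos ?_
    rw [← uIcc_of_le zero_le_one]
    exact intervalIntegral.continuousOn_primitive_interval_left (by
      rw [uIcc_of_le zero_le_one, integrableOn_Icc_iff_integrableOn_Ioc]
      exact integrableOn_diniMajorant_div hdini hωpos hωmono hωcont)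
  simpa using (isLittleO_diniMajorant hdini hωpos hωmono).tendsto_div_nhds_zero.mul hint

end DiniMajorant

theorem stmt16 (β c_ω : ℝ) (hβ : 0 ≤ β) (hc : 1 ≤ c_ω) (ω : ℝ → ℝ)
    (hωpos : ∀ r ∈ Set.Ioc (0 : ℝ) 1, 0 < ω r)
    (hωmono : MonotoneOn ω (Set.Ioc 0 1))
    (hωcont : ContinuousOn ω (Set.Ioc 0 1))
    (hωdec : ∀ θ ∈ Set.Ioo (0 : ℝ) 1, ∀ r ∈ Set.Ioc (0 : ℝ) 1,
      ω r ≤ c_ω * θ ^ (-β) * ω (θ * r))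
    (hdini : IntegrableOn (fun r => ω r / r) (Set.Ioc 0 1)) :
    ∃ ω₁ : ℝ → ℝ, ∃ c : ℝ, 0 < c
      ∧ (∀ r ∈ Set.Ioc (0 : ℝ) 1, 0 < ω₁ r)
      ∧ MonotoneOn ω₁ (Set.Ioc 0 1)
      ∧ ContinuousOn ω₁ (Set.Ioc 0 1)
      ∧ (∀ r ∈ Set.Ioc (0 : ℝ) 1, c * ω r ≤ ω₁ r)
      ∧ (∀ θ ∈ Set.Ioo (0 : ℝ) 1, ∀ r ∈ Set.Ioc (0 : ℝ) 1,
          ω₁ r ≤ c_ω * θ ^ (-β) * ω₁ (θ * r))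
      ∧ IntegrableOn (fun r => ω₁ r / r) (Set.Ioc 0 1)
      ∧ Tendsto (fun r => (ω r / ω₁ r) * ∫ s in r..1, ω₁ s / s)
          (nhdsWithin 0 (Set.Ioi 0)) (nhds 0) :=
  ⟨diniMajorant ω, (√(diniIntegral ω 1))⁻¹,
    inv_pos.2 (sqrt_diniIntegral_pos hdini hωpos hωmono ⟨one_pos, le_rfl⟩),
    fun _ hr => diniMajorant_pos hdini hωpos hωmono hωcont hr,
    monotoneOn_diniMajorant hdini hωpos hωmono,
    continuousOn_diniMajorant hdini hωpos hωmono hωcont,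
    fun _ hr => inv_sqrt_diniIntegral_one_mul_le_diniMajorant hdini hωpos hωmono hr,
    almostDecreasingDivRpow_diniMajorant hdini hωpos hωmono hωdec hβ hc,
    integrableOn_diniMajorant_div hdini hωpos hωmono hωcont,
    tendsto_div_diniMajorant_mul_integral hdini hωpos hωmono hωcont⟩
end

section
/- Let δ > 0 and let σ̂ : (0,δ) → (0,∞) be a continuous increasing function such that the function r ↦ σ̂(r)/r is non-increasing on (0,δ). Then there exists a concave increasing function σ : (0,δ) → (0,∞) such that (1/2) σ(r) ≤ σ̂(r) ≤ σ(r) for every r ∈ (0,δ). -/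
/-!
The concave majorant is the lower envelope `σ r = inf_t (σ̂ t + (σ̂ t / t) r)` of the lines
through `(0, σ̂ t)` and `(t, 2 σ̂ t)`. Monotonicity of `σ̂` (for `r ≤ t`) and of `σ̂ r / r`
(for `t ≤ r`) put `σ̂` below every such line, so `σ̂ ≤ σ`, while the line with `t = r` gives
`σ r ≤ 2 σ̂ r`. An infimum of affine functions is concave, and it is strictly increasing because
all slopes `σ̂ t / t` are bounded below by a positive constant.
-/

open Set

noncomputable def lowerEnvelope {ι : Type*} (a b : ι → ℝ) (r : ℝ) : ℝ :=
  ⨅ i, a i + b i * r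

namespace lowerEnvelope

variable {ι : Type*} [Nonempty ι] {a b : ι → ℝ} {s : Set ℝ}

theorem concaveOn (hs : Convex ℝ s)
    (hbdd : ∀ r ∈ s, BddBelow (range fun i => a i + b i * r)) :
    ConcaveOn ℝ s (lowerEnvelope a b) := by
  refine ⟨hs, fun x hx y hy α β hα hβ hαβ => le_ciInf fun i => ?_⟩
  have hxi : lowerEnvelope a b x ≤ a i + b i * x := ciInf_le (hbdd x hx) i
  have hyi : lowerEnvelope a b y ≤ a i + b i * y := ciInf_le (hbdd y hy) i
  calc α • lowerEnvelope a b x + β • lowerEnvelope a b y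
      ≤ α * (a i + b i * x) + β * (a i + b i * y) := by
        simp only [smul_eq_mul]; gcongr
    _ = a i + b i * (α • x + β • y) := by
        simp only [smul_eq_mul]; linear_combination a i * hαβ

theorem add_mul_sub_le {m x y : ℝ} (hb : ∀ i, m ≤ b i)
    (hbdd : BddBelow (range fun i => a i + b i * x)) (hxy : x ≤ y) :
    lowerEnvelope a b x + m * (y - x) ≤ lowerEnvelope a b y := by
  refine le_ciInf fun i => ?_
  have hxi : lowerEnvelope a b x ≤ a i + b i * x := ciInf_le hbdd i
  have hslope : m * (y - x) ≤ b i * (y - x) := mul_le_mul_of_nonneg_right (hb i) (sub_nonneg.2 hxy)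
  linarith

theorem strictMonoOn {m : ℝ} (hm : 0 < m) (hb : ∀ i, m ≤ b i)
    (hbdd : ∀ r ∈ s, BddBelow (range fun i => a i + b i * r)) :
    StrictMonoOn (lowerEnvelope a b) s := fun x hx y _ hxy => by
  have hgain := add_mul_sub_le hb (hbdd x hx) hxy.le
  linarith [mul_pos hm (sub_pos.2 hxy)]

end lowerEnvelope

section QuasiConcave

variable {f : ℝ → ℝ}

theorem le_add_div_mul_of_monotoneOn_of_antitoneOn_div {s : Set ℝ} (hmono : MonotoneOn f s)
    (hquasi : AntitoneOn (fun r => f r / r) s) {r t : ℝ} (hr : r ∈ s) (ht : t ∈ s)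
    (hr0 : 0 < r) (ht0 : 0 < t) (hft : 0 ≤ f t) :
    f r ≤ f t + f t / t * r := by
  have hline : 0 ≤ f t / t * r := by positivity
  rcases le_total r t with hrt | htr
  · linarith [hmono hr ht hrt]
  · calc f r = f r / r * r := by field_simp
      _ ≤ f t / t * r := mul_le_mul_of_nonneg_right (hquasi ht hr htr) hr0.le
      _ ≤ f t + f t / t * r := by linarith

theorem div_le_div_of_monotoneOn_of_antitoneOn_div {δ : ℝ} (hmono : MonotoneOn f (Ioo 0 δ))
    (hquasi : AntitoneOn (fun r => f r / r) (Ioo 0 δ)) (hf : ∀ r ∈ Ioo 0 δ, 0 ≤ f r)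
    {c t : ℝ} (hc : c ∈ Ioo 0 δ) (ht : t ∈ Ioo 0 δ) :
    f c / δ ≤ f t / t := by
  have hc0 := hf c hc
  have ht0 := hf t ht
  rcases le_total t c with htc | hct
  · calc f c / δ ≤ f c / c := div_le_div_of_nonneg_left hc0 hc.1 hc.2.le
      _ ≤ f t / t := hquasi ht hc htc
  · calc f c / δ ≤ f t / δ := div_le_div_of_nonneg_right (hmono hc ht hct) (hc.1.trans hc.2).le
      _ ≤ f t / t := div_le_div_of_nonneg_left ht0 ht.1 ht.2.le

end QuasiConcave

theorem stmt18_general (δ : ℝ) (hδ : 0 < δ) (σh : ℝ → ℝ)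
    (hmono : StrictMonoOn σh (Set.Ioo 0 δ))
    (hpos : ∀ r ∈ Set.Ioo (0 : ℝ) δ, 0 < σh r)
    (hquasi : AntitoneOn (fun r => σh r / r) (Set.Ioo 0 δ)) :
    ∃ σ : ℝ → ℝ, ConcaveOn ℝ (Set.Ioo 0 δ) σ
      ∧ StrictMonoOn σ (Set.Ioo 0 δ)
      ∧ ∀ r ∈ Set.Ioo (0 : ℝ) δ, (1 / 2) * σ r ≤ σh r ∧ σh r ≤ σ r := by
  have : Nonempty (Ioo 0 δ) := (nonempty_Ioo.mpr hδ).to_subtype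
  have hnonneg r (hr : r ∈ Ioo 0 δ) := (hpos r hr).le
  have hbelow : ∀ r ∈ Ioo 0 δ, ∀ t : Ioo 0 δ, σh r ≤ σh t + σh t / t * r := fun r hr t =>
    le_add_div_mul_of_monotoneOn_of_antitoneOn_div hmono.monotoneOn hquasi hr t.2 hr.1 t.2.1
      (hnonneg t t.2)
  have hbdd : ∀ r ∈ Ioo 0 δ, BddBelow (range fun t : Ioo 0 δ => σh t + σh t / t * r) :=
    fun r hr => ⟨σh r, by rintro _ ⟨t, rfl⟩; exact hbelow r hr t⟩
  have hhalf : δ / 2 ∈ Ioo 0 δ := ⟨by linarith, by linarith⟩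
  refine ⟨lowerEnvelope (fun t : Ioo 0 δ => σh t) (fun t => σh t / t),
    lowerEnvelope.concaveOn (convex_Ioo 0 δ) hbdd,
    lowerEnvelope.strictMonoOn (div_pos (hpos _ hhalf) hδ) (fun t =>
      div_le_div_of_monotoneOn_of_antitoneOn_div hmono.monotoneOn hquasi hnonneg hhalf t.2) hbdd,
    fun r hr => ⟨?_, le_ciInf (hbelow r hr)⟩⟩
  have hdiag : lowerEnvelope _ _ r ≤ σh r + σh r / r * r := ciInf_le (hbdd r hr) ⟨r, hr⟩
  rw [div_mul_cancel₀ _ hr.1.ne'] at hdiag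
  linarith

theorem stmt18 (δ : ℝ) (hδ : 0 < δ) (σh : ℝ → ℝ)
    (hcont : ContinuousOn σh (Set.Ioo 0 δ))
    (hmono : StrictMonoOn σh (Set.Ioo 0 δ))
    (hpos : ∀ r ∈ Set.Ioo (0 : ℝ) δ, 0 < σh r)
    (hquasi : AntitoneOn (fun r => σh r / r) (Set.Ioo 0 δ)) :
    ∃ σ : ℝ → ℝ, ConcaveOn ℝ (Set.Ioo 0 δ) σ
      ∧ StrictMonoOn σ (Set.Ioo 0 δ)
      ∧ ∀ r ∈ Set.Ioo (0 : ℝ) δ, (1 / 2) * σ r ≤ σh r ∧ σh r ≤ σ r :=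
  stmt18_general δ hδ σh hmono hpos hquasi
end
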